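/- The report-noisy-max mechanism with Laplace noise satisfies ε-DP: given K counting queries f₁,...,f_K each with sensitivity 1 (each f_j changes by at most 1 between neighboring datasets), the mechanism that outputs argmax_j (f_j(D) + Z_j) with Z_j independent Lap(2/ε) satisfies (ε, 0)-differential privacy. -/
import Mathlib


open MeasureTheory

/-- The Laplace distribution `Lap(b)` centered at `0`, as a measure on `ℝ`
with density `(1/(2b)) * exp (-|x| / b)` w.r.t. the Lebesgue measure. -/
noncomputable def lap (b : ℝ) : Measure ℝ :=
  volume.withDensity fun x =>
    ENNReal.ofReal ((1 / (2 * b)) * Real.exp (-|x| / b))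

/-- The density of `lap b`. -/
noncomputable def lapDensity (b : ℝ) (x : ℝ) : ENNReal :=
  ENNReal.ofReal ((1 / (2 * b)) * Real.exp (-|x| / b))

lemma lap_eq (b : ℝ) : lap b = volume.withDensity (lapDensity b) := rfl

lemma lapDensity_measurable (b : ℝ) : Measurable (lapDensity b) := by
  apply ENNReal.measurable_ofReal.comp
  fun_prop

instance lap_sigmaFinite (b : ℝ) : SigmaFinite (lap b) := by
  rw [lap_eq]
  exact SigmaFinite.withDensity_ofReal _

/-- Tonelli for products of single-coordinate functions (lintegral version). -/
lemma lintegral_pi_prod {α : Type*} [MeasurableSpace α] (μ : Measure α) [SigmaFinite μ] :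
    ∀ {n : ℕ} (h : Fin n → α → ENNReal), (∀ i, Measurable (h i)) →
      ∫⁻ z, ∏ i, h i (z i) ∂(Measure.pi fun _ : Fin n => μ) = ∏ i, ∫⁻ x, h i x ∂μ := by
  intro n
  induction n with
  | zero =>
    intro h _
    simp [lintegral_const]
  | succ n ih =>
    intro h hm
    have hpres := (measurePreserving_piFinSuccAbove (fun _ : Fin (n + 1) => μ) 0).symm
    have hmeas : Measurable fun z : Fin (n + 1) → α => ∏ i, h i (z i) :=
      Finset.measurable_prod _ fun i _ => (hm i).comp (measurable_pi_apply i)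
    rw [← hpres.lintegral_comp hmeas]
    simp_rw [MeasurableEquiv.piFinSuccAbove_symm_apply, Fin.insertNthEquiv,
      Fin.prod_univ_succ, Fin.insertNth_zero]
    simp only [Equiv.coe_fn_mk, Fin.zero_succAbove, cast_eq, Function.comp_def,
      Fin.cons_zero, Fin.cons_succ]
    have h2 : Measurable fun w : Fin n → α => ∏ i : Fin n, h i.succ (w i) :=
      Finset.measurable_prod _ fun i _ => (hm i.succ).comp (measurable_pi_apply i)
    rw [show (∫⁻ a : α × (Fin n → α), h 0 a.1 * ∏ x : Fin n, h x.succ (a.2 x)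
          ∂μ.prod (Measure.pi fun _ : Fin n => μ)) =
        (∫⁻ x, h 0 x ∂μ) * ∫⁻ w, ∏ i : Fin n, h i.succ (w i)
          ∂(Measure.pi fun _ : Fin n => μ) from
      lintegral_prod_mul (hm 0).aemeasurable h2.aemeasurable]
    rw [ih (fun i => h i.succ) (fun i => hm i.succ)]

/-- The product of Laplace measures is the with-density measure w.r.t. the
product Lebesgue measure, with the product density. -/
lemma pi_lap_eq (b : ℝ) (K : ℕ) :
    Measure.pi (fun _ : Fin K => lap b) =
      (Measure.pi fun _ : Fin K => (volume : Measure ℝ)).withDensity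
        (fun z => ∏ i, lapDensity b (z i)) := by
  apply Measure.pi_eq
  intro s hs
  rw [withDensity_apply _ (MeasurableSet.univ_pi hs),
    ← lintegral_indicator (MeasurableSet.univ_pi hs)]
  have hind : (Set.univ.pi s).indicator (fun z => ∏ i, lapDensity b (z i)) =
      fun z => ∏ i, (s i).indicator (lapDensity b) (z i) := by
    funext z
    by_cases hz : z ∈ Set.univ.pi s
    · rw [Set.indicator_of_mem hz]
      exact Finset.prod_congr rfl fun i _ =>
        (Set.indicator_of_mem (hz i (Set.mem_univ i)) _).symm
    · rw [Set.indicator_of_notMem hz]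
      obtain ⟨i₀, hi₀⟩ : ∃ i, z i ∉ s i := by
        simpa [Set.mem_pi] using hz
      exact (Finset.prod_eq_zero (Finset.mem_univ i₀)
        (Set.indicator_of_notMem hi₀ _)).symm
  rw [hind, lintegral_pi_prod _ _ (fun i => (lapDensity_measurable b).indicator (hs i))]
  exact Finset.prod_congr rfl fun i _ => by
    rw [lintegral_indicator (hs i), lap_eq, withDensity_apply _ (hs i)]

/-- One-dimensional shift bound for the Laplace density. -/
lemma lapDensity_shift (ε : ℝ) (hε : 0 < ε) (x : ℝ) :
    lapDensity (2 / ε) (x - 2) ≤ ENNReal.ofReal (Real.exp ε) * lapDensity (2 / ε) x := by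
  set b := 2 / ε with hb
  have hbpos : 0 < b := by positivity
  unfold lapDensity
  rw [← ENNReal.ofReal_mul (Real.exp_nonneg ε)]
  apply ENNReal.ofReal_le_ofReal
  have hcoeff : 0 ≤ 1 / (2 * b) := by positivity
  have hexp : Real.exp (-|x - 2| / b) ≤ Real.exp ε * Real.exp (-|x| / b) := by
    rw [← Real.exp_add]
    apply Real.exp_le_exp.mpr
    have h2b : 2 / b = ε := by rw [hb]; field_simp
    have habs : -|x - 2| ≤ 2 + -|x| := by
      have h := abs_sub_abs_le_abs_sub x (x - 2)
      have h2 : x - (x - 2) = 2 := by ring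
      rw [h2] at h
      have h3 : |(2 : ℝ)| = 2 := by norm_num
      rw [h3] at h
      linarith
    calc -|x - 2| / b ≤ (2 + -|x|) / b := by
          gcongr
      _ = 2 / b + -|x| / b := add_div _ _ _
      _ = ε + -|x| / b := by rw [h2b]
  calc 1 / (2 * b) * Real.exp (-|x - 2| / b)
      ≤ 1 / (2 * b) * (Real.exp ε * Real.exp (-|x| / b)) := by
        exact mul_le_mul_of_nonneg_left hexp hcoeff
    _ = Real.exp ε * (1 / (2 * b) * Real.exp (-|x| / b)) := by ring

set_option maxHeartbeats 1000000 in
/-- **Report-noisy-max with Laplace noise satisfies ε-DP.** Given `K`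
counting queries `f 1, …, f K`, each of sensitivity `1` between neighboring
datasets, the mechanism that outputs `argmax_j (f j D + Z j)` with the `Z j`
independent `Lap(2/ε)` random variables satisfies `(ε, 0)`-differential
privacy: for every output `j`, the probability (over the joint noise
distribution) that `j` is the unique noisy maximizer changes by at most a
factor `exp ε` between neighboring datasets. -/
theorem report_noisy_max_dp {X : Type*} (K : ℕ) (Neighbor : X → X → Prop)
    (f : Fin K → X → ℝ) (ε : ℝ) (hε : 0 < ε)
    (hsens : ∀ j D D', Neighbor D D' → |f j D - f j D'| ≤ 1) :
    ∀ D D', Neighbor D D' → ∀ j : Fin K,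
      (Measure.pi fun _ : Fin K => lap (2 / ε))
          {z | ∀ i, i ≠ j → f i D + z i < f j D + z j} ≤
        ENNReal.ofReal (Real.exp ε) *
          (Measure.pi fun _ : Fin K => lap (2 / ε))
            {z | ∀ i, i ≠ j → f i D' + z i < f j D' + z j} := by
  intro D D' hN j
  classical
  set g := lapDensity (2 / ε) with hgdef
  have hg : Measurable g := lapDensity_measurable _
  set G : (Fin K → ℝ) → ENNReal := fun z => ∏ i, g (z i) with hGdef
  have hG : Measurable G :=
    Finset.measurable_prod _ fun i _ => hg.comp (measurable_pi_apply i)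
  set A : Set (Fin K → ℝ) := {z | ∀ i, i ≠ j → f i D + z i < f j D + z j} with hA
  set A' : Set (Fin K → ℝ) := {z | ∀ i, i ≠ j → f i D' + z i < f j D' + z j} with hA'
  have hA'meas : MeasurableSet A' := by
    have : A' = ⋂ i, ⋂ (_ : i ≠ j), {z : Fin K → ℝ | f i D' + z i < f j D' + z j} := by
      ext z; simp [hA']
    rw [this]
    exact MeasurableSet.iInter fun i => MeasurableSet.iInter fun _ =>
      measurableSet_lt (measurable_const.add (measurable_pi_apply i))
        (measurable_const.add (measurable_pi_apply j))
  set c : Fin K → ℝ := fun i => if i = j then 2 else 0 with hc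
  have hTmeas : Measurable fun z : Fin K → ℝ => z + c := measurable_add_const c
  -- the shift by `c` maps `A` into `A'`
  have hsub : A ⊆ (fun z => z + c) ⁻¹' A' := by
    intro z hz
    intro i hij
    have h1 := abs_le.mp (hsens i D D' hN)
    have h2 := abs_le.mp (hsens j D D' hN)
    have hz' := hz i hij
    have hci : c i = 0 := if_neg hij
    have hcj : c j = 2 := if_pos rfl
    simp only [Pi.add_apply, hci, hcj]
    linarith
  -- pointwise density bound
  have key : ∀ y : Fin K → ℝ, G (y - c) ≤ ENNReal.ofReal (Real.exp ε) * G y := by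
    intro y
    have hprod : ∀ i ∈ Finset.univ.erase j, g ((y - c) i) = g (y i) := by
      intro i hi
      have hij : i ≠ j := Finset.ne_of_mem_erase hi
      simp [hc, Pi.sub_apply, if_neg hij]
    have hGyc : G (y - c) = (∏ i ∈ Finset.univ.erase j, g (y i)) * g (y j - 2) := by
      show (∏ i : Fin K, g ((y - c) i)) = _
      rw [← Finset.prod_erase_mul _ _ (Finset.mem_univ j)]
      congr 1
      · exact Finset.prod_congr rfl hprod
      · simp [hc, Pi.sub_apply]
    have hGy : G y = (∏ i ∈ Finset.univ.erase j, g (y i)) * g (y j) := by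
      show (∏ i : Fin K, g (y i)) = _
      rw [← Finset.prod_erase_mul _ _ (Finset.mem_univ j)]
    rw [hGyc, hGy, mul_comm (ENNReal.ofReal (Real.exp ε)) _, mul_assoc]
    exact mul_le_mul_right (by rw [mul_comm]; exact lapDensity_shift ε hε (y j)) _
  calc (Measure.pi fun _ : Fin K => lap (2 / ε)) A
      ≤ (Measure.pi fun _ : Fin K => lap (2 / ε)) ((fun z => z + c) ⁻¹' A') :=
        measure_mono hsub
    _ = ∫⁻ z in (fun z => z + c) ⁻¹' A', G z
          ∂(Measure.pi fun _ : Fin K => (volume : Measure ℝ)) := by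
        rw [pi_lap_eq, withDensity_apply _ (hA'meas.preimage hTmeas)]
    _ = ∫⁻ z, ((fun z => z + c) ⁻¹' A').indicator G z
          ∂(Measure.pi fun _ : Fin K => (volume : Measure ℝ)) := by
        rw [lintegral_indicator (hA'meas.preimage hTmeas)]
    _ = ∫⁻ z, (A'.indicator fun y => G (y - c)) (z + c)
          ∂(Measure.pi fun _ : Fin K => (volume : Measure ℝ)) := by
        congr 1
        funext z
        by_cases hz : z + c ∈ A'
        · have hzp : z ∈ (fun z => z + c) ⁻¹' A' := hz
          have h1 : ((fun z => z + c) ⁻¹' A').indicator G z = G z :=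
            Set.indicator_of_mem hzp G
          have h2 : A'.indicator (fun y => G (y - c)) (z + c) = G (z + c - c) :=
            Set.indicator_of_mem hz _
          rw [h1, h2]
          simp
        · have hzp : z ∉ (fun z => z + c) ⁻¹' A' := hz
          have h1 : ((fun z => z + c) ⁻¹' A').indicator G z = 0 :=
            Set.indicator_of_notMem hzp G
          have h2 : A'.indicator (fun y => G (y - c)) (z + c) = 0 :=
            Set.indicator_of_notMem hz _
          rw [h1, h2]
    _ = ∫⁻ y, (A'.indicator fun y => G (y - c)) y
          ∂(Measure.pi fun _ : Fin K => (volume : Measure ℝ)) :=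
        lintegral_add_right_eq_self _ c
    _ ≤ ∫⁻ y, (A'.indicator fun y => ENNReal.ofReal (Real.exp ε) * G y) y
          ∂(Measure.pi fun _ : Fin K => (volume : Measure ℝ)) := by
        apply lintegral_mono
        intro y
        exact Set.indicator_le_indicator (key y)
    _ = ENNReal.ofReal (Real.exp ε) * ∫⁻ y in A', G y
          ∂(Measure.pi fun _ : Fin K => (volume : Measure ℝ)) := by
        rw [lintegral_indicator hA'meas, lintegral_const_mul _ hG]
    _ = ENNReal.ofReal (Real.exp ε) *
          (Measure.pi fun _ : Fin K => lap (2 / ε)) A' := by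
        rw [pi_lap_eq, withDensity_apply _ hA'meas]
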